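/- Let a ∈ A have spectrum consisting of a sequence of distinct nonzero points λ_1, λ_2, … together with their only cluster point 0. Let p_i = p(λ_i, a) and a_n = ∑_{i=1}^n λ_i p_i. Then σ(a - a_n) ⊆ {λ_{n+1}, λ_{n+2}, …} ∪ {0}, and consequently the spectral radius r_σ(a - a_n) → 0 as n → ∞. -/

import Mathlib

noncomputable def rieszProj {A : Type*} [NormedRing A] [NormedAlgebra ℂ A]
    (a : A) (c : ℂ) (R : ℝ) : A :=
  (2 * Real.pi * Complex.I)⁻¹ • ∮ z in C(c, R), Ring.inverse (algebraMap ℂ A z - a)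

/-!
Pass to the bicommutant `B` of `{a}`: it is a closed commutative subalgebra containing `a`, and a
centralizer contains the inverses of its invertible elements, so spectra and Riesz projections
computed in `B` agree with those computed in `A`. In the commutative Banach algebra `B` every
spectral value of `x` is `φ x` for a character `φ`, and by the Cauchy integral formula
`φ pᵢ` is `1` if `φ a = λᵢ` and `0` otherwise. Hence `φ (a - aₙ)` is `0` when
`φ a ∈ {0, λ₀, …, λₙ₋₁}` and `φ a` otherwise; the spectral radius bound follows from `λᵢ → 0`.
-/

open Filter Topology Metric

lemma AlgHom.map_resolvent {R A B : Type*} [CommRing R] [Ring A] [Ring B] [Algebra R A]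
    [Algebra R B] (φ : A →ₐ[R] B) {a : A} {z : R} (hz : z ∈ resolventSet R a) :
    φ (resolvent a z) = resolvent (φ a) z := by
  obtain ⟨u, hu⟩ := spectrum.mem_resolventSet_iff.mp hz
  have hφu : ((Units.map (φ : A →* B) u : Bˣ) : B) = algebraMap R B z - φ a := by simp [hu]
  rw [resolvent, resolvent, ← hu, ← hφu, Ring.inverse_unit, Ring.inverse_unit]
  exact (Units.coe_map_inv _ u).symm

lemma ContinuousLinearMap.circleIntegral_comp_comm {E F : Type*} [NormedAddCommGroup E]
    [NormedSpace ℂ E] [CompleteSpace E] [NormedAddCommGroup F] [NormedSpace ℂ F] [CompleteSpace F]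
    (L : E →L[ℂ] F) {f : ℂ → E} {c : ℂ} {R : ℝ} (hf : CircleIntegrable f c R) :
    (∮ z in C(c, R), L (f z)) = L (∮ z in C(c, R), f z) := by
  simp only [circleIntegral, ← L.intervalIntegral_comp_comm hf.out, map_smul]

lemma Subalgebra.isUnit_coe_centralizer_iff {R A : Type*} [CommSemiring R] [Semiring A]
    [Algebra R A] {s : Set A} {x : Subalgebra.centralizer R s} : IsUnit (x : A) ↔ IsUnit x := by
  refine ⟨fun ⟨u, hu⟩ ↦ ?_, IsUnit.map (Subalgebra.centralizer R s).val⟩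
  have hinv : (↑u⁻¹ : A) ∈ Subalgebra.centralizer R s :=
    fun g hg ↦ (hu ▸ x.2 g hg : Commute g u).units_inv_right
  refine ⟨⟨x, ⟨_, hinv⟩, Subtype.ext ?_, Subtype.ext ?_⟩, rfl⟩
  · simp [← hu]
  · simp [← hu]

lemma Subalgebra.spectrum_centralizer_eq {R A : Type*} [CommRing R] [Ring A] [Algebra R A]
    {s : Set A} (x : Subalgebra.centralizer R s) : spectrum R x = spectrum R (x : A) :=
  Set.ext fun _ ↦ not_congr isUnit_coe_centralizer_iff.symm

section RieszProjection

variable {A : Type*} [NormedRing A] [NormedAlgebra ℂ A]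

lemma rieszProj_eq_smul_circleIntegral_resolvent (a : A) (c : ℂ) (R : ℝ) :
    rieszProj a c R = (2 * Real.pi * Complex.I)⁻¹ • ∮ z in C(c, R), resolvent a z :=
  rfl

lemma circleIntegrable_resolvent [CompleteSpace A] {a : A} {c : ℂ} {R : ℝ} (hR : 0 ≤ R)
    (h : sphere c R ⊆ resolventSet ℂ a) : CircleIntegrable (resolvent a) c R :=
  ContinuousOn.circleIntegrable hR fun _ hz ↦
    (spectrum.hasDerivAt_resolvent_const_left (h hz)).continuousAt.continuousWithinAt

lemma AlgHom.map_rieszProj [CompleteSpace A] {B : Type*} [NormedRing B] [NormedAlgebra ℂ B]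
    [CompleteSpace B] (φ : A →ₐ[ℂ] B) (hφ : Continuous φ) {a : A} {c : ℂ} {R : ℝ} (hR : 0 ≤ R)
    (h : sphere c R ⊆ resolventSet ℂ a) : φ (rieszProj a c R) = rieszProj (φ a) c R := by
  let L : A →L[ℂ] B := ⟨φ.toLinearMap, hφ⟩
  change L (rieszProj a c R) = _
  rw [rieszProj_eq_smul_circleIntegral_resolvent, rieszProj_eq_smul_circleIntegral_resolvent,
    map_smul, ← L.circleIntegral_comp_comm (circleIntegrable_resolvent hR h)]
  exact congrArg _ (circleIntegral.integral_congr hR fun z hz ↦ φ.map_resolvent (h hz))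

open Classical in
lemma Complex.rieszProj_eq_ite {w c : ℂ} {R : ℝ} (hR : 0 < R) (hw : w ∉ sphere c R) :
    rieszProj w c R = if w ∈ ball c R then 1 else 0 := by
  have hinv : ∀ z, Ring.inverse (algebraMap ℂ ℂ z - w) = (z - w)⁻¹ := fun z ↦ by
    rw [Ring.inverse_eq_inv', Algebra.algebraMap_self_apply]
  simp only [rieszProj, hinv]
  split_ifs with hball
  · rw [circleIntegral.integral_sub_inv_of_mem_ball hball, smul_eq_mul,
      inv_mul_cancel₀ two_pi_I_ne_zero]
  · have hout : w ∉ closedBall c R := by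
      rw [← ball_union_sphere]
      exact fun h ↦ h.elim hball hw
    have hdiff : DifferentiableOn ℂ (fun z ↦ (z - w)⁻¹) (closedBall c R) := fun z hz ↦
      ((differentiableAt_id.sub_const w).inv
        (sub_ne_zero.mpr fun h ↦ hout (h ▸ hz))).differentiableWithinAt
    rw [← closure_ball c hR.ne'] at hdiff
    rw [hdiff.diffContOnCl.circleIntegral_eq_zero hR.le, smul_zero]

lemma sphere_subset_resolventSet {a : A} {c : ℂ} {R : ℝ} (hR : 0 < R)
    (hiso : ∀ z ∈ spectrum ℂ a, ‖z - c‖ ≤ R → z = c) : sphere c R ⊆ resolventSet ℂ a := by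
  intro z hz
  rw [spectrum.mem_resolventSet_iff, ← spectrum.notMem_iff]
  intro hspec
  have hzc : ‖z - c‖ = R := mem_sphere_iff_norm.mp hz
  rw [hiso z hspec hzc.le, sub_self, norm_zero] at hzc
  exact hR.ne hzc

lemma WeakDual.CharacterSpace.apply_rieszProj [CompleteSpace A] (φ : characterSpace ℂ A)
    {a : A} {c : ℂ} {R : ℝ} (hR : 0 < R) (hiso : ∀ z ∈ spectrum ℂ a, ‖z - c‖ ≤ R → z = c) :
    φ (rieszProj a c R) = if φ a = c then 1 else 0 := by
  classical
  have hsphere := sphere_subset_resolventSet hR hiso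
  have hφa : φ a ∈ spectrum ℂ a := apply_mem_spectrum φ a
  have hball : φ a ∈ ball c R ↔ φ a = c :=
    ⟨fun h ↦ hiso _ hφa (mem_ball_iff_norm.mp h).le, fun h ↦ h ▸ mem_ball_self hR⟩
  calc φ (rieszProj a c R) = rieszProj (φ a) c R :=
        (toAlgHom φ).map_rieszProj (map_continuous φ) hR.le hsphere
    _ = if φ a ∈ ball c R then 1 else 0 := Complex.rieszProj_eq_ite hR fun h ↦ hφa (hsphere h)
    _ = if φ a = c then 1 else 0 := if_congr hball rfl rfl

end RieszProjection

lemma tendsto_toReal_spectralRadius_of_spectrum_subset {𝕜 A : Type*} [NormedField 𝕜] [Ring A]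
    [Algebra 𝕜 A] {x : ℕ → A} {lam : ℕ → 𝕜} (hlim : Tendsto lam atTop (𝓝 0))
    (hx : ∀ N, spectrum 𝕜 (x N) ⊆ {0} ∪ lam '' {i | N ≤ i}) :
    Tendsto (fun N ↦ (spectralRadius 𝕜 (x N)).toReal) atTop (𝓝 0) := by
  have hlim' : Tendsto (fun i ↦ ‖lam i‖ₑ) atTop (𝓝 0) := by simpa using hlim.enorm
  have hρ : Tendsto (fun N ↦ spectralRadius 𝕜 (x N)) atTop (𝓝 0) := by
    refine ENNReal.tendsto_atTop_zero.mpr fun ε hε ↦ ?_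
    obtain ⟨M, hM⟩ := ENNReal.tendsto_atTop_zero.mp hlim' ε hε
    refine ⟨M, fun N hN ↦ iSup₂_le fun k hk ↦ ?_⟩
    rcases hx N hk with rfl | ⟨i, hi, rfl⟩
    · simp
    · exact hM i (hN.trans hi)
  simpa [Function.comp_def] using (ENNReal.tendsto_toReal ENNReal.zero_ne_top).comp hρ

lemma spectrum_sub_sum_rieszProj_subset_of_comm {B : Type*} [NormedCommRing B]
    [NormedAlgebra ℂ B] [CompleteSpace B] {b : B} {lam : ℕ → ℂ} (hinj : Function.Injective lam)
    (hspec : spectrum ℂ b ⊆ {0} ∪ Set.range lam) {R : ℕ → ℝ} (hR : ∀ i, 0 < R i)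
    (hiso : ∀ i, ∀ z ∈ spectrum ℂ b, ‖z - lam i‖ ≤ R i → z = lam i) (N : ℕ) :
    spectrum ℂ (b - ∑ i ∈ Finset.range N, lam i • rieszProj b (lam i) (R i)) ⊆
      {0} ∪ lam '' {i | N ≤ i} := by
  classical
  intro z hz
  obtain ⟨φ, rfl⟩ := WeakDual.CharacterSpace.mem_spectrum_iff_exists.mp hz
  have hterm : ∀ i, φ (lam i • rieszProj b (lam i) (R i)) = if φ b = lam i then φ b else 0 := by
    intro i
    rw [map_smul, WeakDual.CharacterSpace.apply_rieszProj φ (hR i) (hiso i), smul_eq_mul]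
    split_ifs with h <;> simp [h]
  simp only [map_sub, map_sum, hterm]
  rcases hspec (WeakDual.CharacterSpace.apply_mem_spectrum φ b) with hzero | ⟨j, hj⟩
  · simp [Set.mem_singleton_iff.mp hzero]
  · simp only [← hj, hinj.eq_iff, Finset.sum_ite_eq, Finset.mem_range]
    split_ifs with hjN
    · simp
    · exact Or.inr ⟨j, not_lt.mp hjN, by simp⟩

lemma spectrum_sub_sum_rieszProj_subset {A : Type*} [NormedRing A] [NormedAlgebra ℂ A]
    [CompleteSpace A] {a : A} {lam : ℕ → ℂ} (hinj : Function.Injective lam)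
    (hspec : spectrum ℂ a ⊆ {0} ∪ Set.range lam) {R : ℕ → ℝ} (hR : ∀ i, 0 < R i)
    (hiso : ∀ i, ∀ z ∈ spectrum ℂ a, ‖z - lam i‖ ≤ R i → z = lam i) (N : ℕ) :
    spectrum ℂ (a - ∑ i ∈ Finset.range N, lam i • rieszProj a (lam i) (R i)) ⊆
      {0} ∪ lam '' {i | N ≤ i} := by
  let B := Subalgebra.centralizer ℂ (Set.centralizer {a})
  have : CompleteSpace B := (Set.isClosed_centralizer _).completeSpace_coe
  let _ : NormedCommRing B :=
    { (inferInstance : NormedRing B) with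
      mul_comm := fun x y ↦ Subtype.ext <|
        Set.centralizer_centralizer_comm_of_comm (by simp) _ x.2 _ y.2 }
  let aB : B := ⟨a, Set.subset_centralizer_centralizer rfl⟩
  have hspecB : spectrum ℂ aB = spectrum ℂ a := Subalgebra.spectrum_centralizer_eq aB
  have hproj : ∀ i, ((rieszProj aB (lam i) (R i) : B) : A) = rieszProj a (lam i) (R i) := fun i ↦
    B.val.map_rieszProj (a := aB) continuous_subtype_val (hR i).le
      (sphere_subset_resolventSet (hR i) (hspecB ▸ hiso i))
  have hcoe : ((aB - ∑ i ∈ Finset.range N, lam i • rieszProj aB (lam i) (R i) : B) : A) =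
      a - ∑ i ∈ Finset.range N, lam i • rieszProj a (lam i) (R i) := by
    push_cast [hproj]
    rfl
  rw [← hcoe, ← Subalgebra.spectrum_centralizer_eq]
  exact spectrum_sub_sum_rieszProj_subset_of_comm hinj (hspecB ▸ hspec) hR (hspecB ▸ hiso) N

open Filter in
theorem stmt_14_general {A : Type*} [NormedRing A] [NormedAlgebra ℂ A] [CompleteSpace A]
    (a : A) (lam : ℕ → ℂ) (hinj : Function.Injective lam)
    (hlim : Tendsto lam atTop (nhds 0))
    (hspec : spectrum ℂ a = {0} ∪ Set.range lam)
    (R : ℕ → ℝ) (hRpos : ∀ i, 0 < R i)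
    (hiso : ∀ i, ∀ z ∈ spectrum ℂ a, ‖z - lam i‖ ≤ R i → z = lam i) :
    (∀ N : ℕ,
      spectrum ℂ (a - ∑ i ∈ Finset.range N, lam i • rieszProj a (lam i) (R i)) ⊆
        {0} ∪ lam '' {i | N ≤ i}) ∧
    Tendsto
      (fun N : ℕ =>
        (spectralRadius ℂ (a - ∑ i ∈ Finset.range N, lam i • rieszProj a (lam i) (R i))).toReal)
      atTop (nhds 0) := by
  have hsubset := spectrum_sub_sum_rieszProj_subset hinj hspec.subset hRpos hiso
  exact ⟨hsubset, tendsto_toReal_spectralRadius_of_spectrum_subset hlim hsubset⟩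

open Filter in
theorem stmt_14 {A : Type*} [NormedRing A] [NormedAlgebra ℂ A] [CompleteSpace A]
    (a : A) (lam : ℕ → ℂ) (hinj : Function.Injective lam) (hne : ∀ i, lam i ≠ 0)
    (hlim : Tendsto lam atTop (nhds 0))
    (hspec : spectrum ℂ a = {0} ∪ Set.range lam)
    (R : ℕ → ℝ) (hRpos : ∀ i, 0 < R i)
    (hiso : ∀ i, ∀ z ∈ spectrum ℂ a, ‖z - lam i‖ ≤ R i → z = lam i) :
    (∀ N : ℕ,
      spectrum ℂ (a - ∑ i ∈ Finset.range N, lam i • rieszProj a (lam i) (R i)) ⊆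
        {0} ∪ lam '' {i | N ≤ i}) ∧
    Tendsto
      (fun N : ℕ =>
        (spectralRadius ℂ (a - ∑ i ∈ Finset.range N, lam i • rieszProj a (lam i) (R i))).toReal)
      atTop (nhds 0) :=
  stmt_14_general a lam hinj hlim hspec R hRpos hiso
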